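/- arXiv:math/0608787 — 12 statements merged into one kernel-verified Lean document; each statement's English description precedes it below -/
import Mathlib

section
/- For all x in [0,1], 3x/(2 + sqrt(1-x^2)) ≤ arcsin(x). -/
/-!
With `t = arcsin x` the inequality reads `3 sin t ≤ t (2 + cos t)`. On `[0, π]` the difference
`t (2 + cos t) - 3 sin t` vanishes at `0` together with its first two derivatives
`2 - 2 cos t - t sin t` and `sin t - t cos t`, and the third derivative `t sin t` is nonnegative
there, so it is nonnegative by three applications of monotonicity. For `t ≥ π` it is trivial,
since `3 sin t ≤ 3 < π ≤ t (2 + cos t)`.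
-/

open Real Set

lemma nonneg_of_hasDerivAt_of_nonneg {f f' : ℝ → ℝ} {a b t : ℝ} (hfa : f a = 0)
    (hf : ∀ s, HasDerivAt f (f' s) s) (hf' : ∀ s ∈ Ioo a b, 0 ≤ f' s) (ht : t ∈ Icc a b) :
    0 ≤ f t := by
  have hmono : MonotoneOn f (Icc a b) :=
    monotoneOn_of_hasDerivWithinAt_nonneg (convex_Icc a b)
      (fun s _ ↦ (hf s).continuousAt.continuousWithinAt)
      (fun s _ ↦ (hf s).hasDerivWithinAt)
      (fun s hs ↦ hf' s (by rwa [interior_Icc] at hs))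
  simpa [hfa] using hmono (left_mem_Icc.mpr (ht.1.trans ht.2)) ht ht.1

lemma sin_sub_mul_cos_nonneg {t : ℝ} (ht : t ∈ Icc 0 π) : 0 ≤ sin t - t * cos t := by
  have hderiv (s : ℝ) : HasDerivAt (fun s ↦ sin s - s * cos s) (s * sin s) s :=
    ((hasDerivAt_sin s).sub ((hasDerivAt_id' s).mul (hasDerivAt_cos s))).congr_deriv (by ring)
  simpa using nonneg_of_hasDerivAt_of_nonneg (by simp) hderiv
    (fun s hs ↦ mul_nonneg hs.1.le (sin_nonneg_of_nonneg_of_le_pi hs.1.le hs.2.le)) ht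

lemma two_sub_two_mul_cos_sub_mul_sin_nonneg {t : ℝ} (ht : t ∈ Icc 0 π) :
    0 ≤ 2 - 2 * cos t - t * sin t := by
  have hderiv (s : ℝ) :
      HasDerivAt (fun s ↦ 2 - 2 * cos s - s * sin s) (sin s - s * cos s) s :=
    ((((hasDerivAt_cos s).const_mul 2).const_sub 2).sub
      ((hasDerivAt_id' s).mul (hasDerivAt_sin s))).congr_deriv (by ring)
  simpa using nonneg_of_hasDerivAt_of_nonneg (by simp) hderiv
    (fun s hs ↦ sin_sub_mul_cos_nonneg (Ioo_subset_Icc_self hs)) ht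

lemma three_mul_sin_le_mul_two_add_cos {t : ℝ} (ht : 0 ≤ t) : 3 * sin t ≤ t * (2 + cos t) := by
  rcases le_total t π with htπ | hπt
  · have hderiv (s : ℝ) :
        HasDerivAt (fun s ↦ s * (2 + cos s) - 3 * sin s) (2 - 2 * cos s - s * sin s) s :=
      (((hasDerivAt_id' s).mul ((hasDerivAt_cos s).const_add 2)).sub
        ((hasDerivAt_sin s).const_mul 3)).congr_deriv (by ring)
    have := nonneg_of_hasDerivAt_of_nonneg (by simp) hderiv
      (fun s hs ↦ two_sub_two_mul_cos_sub_mul_sin_nonneg (Ioo_subset_Icc_self hs)) ⟨ht, htπ⟩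
    linarith
  · calc 3 * sin t ≤ 3 := by linarith [sin_le_one t]
      _ ≤ π := pi_gt_three.le
      _ ≤ t * 1 := by linarith
      _ ≤ t * (2 + cos t) := by gcongr; linarith [neg_one_le_cos t]

theorem stmt_0 : ∀ x ∈ Set.Icc (0:ℝ) 1,
    3 * x / (2 + Real.sqrt (1 - x ^ 2)) ≤ Real.arcsin x := by
  intro x ⟨hx0, hx1⟩
  have h := three_mul_sin_le_mul_two_add_cos (arcsin_nonneg.mpr hx0)
  rw [sin_arcsin (by linarith) hx1, cos_arcsin] at h
  rwa [div_le_iff₀ (by positivity)]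
end

section
/- For all x in [0,1], 3x/(2 + sqrt(1-x^2)) ≤ 6(sqrt(1+x) - sqrt(1-x))/(4 + sqrt(1+x) + sqrt(1-x)). -/
theorem stmt_1 : ∀ x ∈ Set.Icc (0:ℝ) 1,
    3 * x / (2 + Real.sqrt (1 - x ^ 2)) ≤
      6 * (Real.sqrt (1 + x) - Real.sqrt (1 - x)) /
        (4 + Real.sqrt (1 + x) + Real.sqrt (1 - x)) := by
  rintro x ⟨hx0, hx1⟩
  set a := Real.sqrt (1 + x) with ha
  set b := Real.sqrt (1 - x) with hb
  have ha0 : 0 ≤ a := Real.sqrt_nonneg _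
  have hb0 : 0 ≤ b := Real.sqrt_nonneg _
  have ha2 : a ^ 2 = 1 + x := Real.sq_sqrt (by linarith)
  have hb2 : b ^ 2 = 1 - x := Real.sq_sqrt (by linarith)
  have hab : a ≥ b := Real.sqrt_le_sqrt (by linarith)
  have hs : Real.sqrt (1 - x ^ 2) = a * b := by
    rw [ha, hb, ← Real.sqrt_mul (by linarith)]
    ring_nf
  rw [hs]
  have h1 : (0:ℝ) < 2 + a * b := by positivity
  have h2 : (0:ℝ) < 4 + a + b := by positivity
  rw [div_le_div_iff₀ h1 h2]
  nlinarith [sq_nonneg (a + b - 2), sq_nonneg (a - b), mul_nonneg (sub_nonneg.2 hab) (sq_nonneg (a + b - 2))]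
end

section
/- For all x in [0,1], 6(sqrt(1+x) - sqrt(1-x))/(4 + sqrt(1+x) + sqrt(1-x)) ≤ arcsin(x). -/
/-!
Put `x = sin (2t)` with `t = arcsin x / 2 ∈ [0, π/4]`. Then `√(1 ± x) = cos t ± sin t`, and the
inequality becomes `3 sin t ≤ t (2 + cos t)`, the Cusa–Huygens-type bound `sin t / t ≤ (2 + cos t) / 3`.
That bound holds for all `t ≥ 0`: on `[0, π]` the difference `t (2 + cos t) - 3 sin t` vanishes at `0`
and has derivative `2 - 2 cos t - t sin t = 4 sin (t/2) (sin (t/2) - (t/2) cos (t/2)) > 0`,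
while for `t ≥ π` it is immediate from `3 sin t ≤ 3 < t`.
-/

open Real Set

lemma mul_cos_lt_sin {u : ℝ} (h0 : 0 < u) (h1 : u < π / 2) : u * cos u < sin u := by
  have hcos : 0 < cos u := cos_pos_of_mem_Ioo ⟨by linarith, h1⟩
  have htan := lt_tan h0 h1
  rwa [tan_eq_sin_div_cos, lt_div_iff₀ hcos] at htan

lemma two_sub_two_mul_cos_sub_mul_sin_pos {t : ℝ} (h0 : 0 < t) (h1 : t < π) :
    0 < 2 - 2 * cos t - t * sin t := by
  set u := t / 2 with hu
  have ht : t = 2 * u := by rw [hu]; ring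
  have hsin : 0 < sin u := sin_pos_of_pos_of_lt_pi (by linarith) (by linarith)
  have hlt : u * cos u < sin u := mul_cos_lt_sin (by linarith) (by linarith)
  have half_angle : 2 - 2 * cos t - t * sin t = 4 * sin u * (sin u - u * cos u) := by
    rw [ht, cos_two_mul, sin_two_mul, cos_sq']
    ring
  rw [half_angle]
  have := sub_pos.mpr hlt
  positivity

lemma hasDerivAt_mul_two_add_cos_sub_three_mul_sin (t : ℝ) :
    HasDerivAt (fun t => t * (2 + cos t) - 3 * sin t) (2 - 2 * cos t - t * sin t) t := by
  have := ((hasDerivAt_id t).mul ((hasDerivAt_const t (2 : ℝ)).add (hasDerivAt_cos t))).sub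
    ((hasDerivAt_sin t).const_mul 3)
  refine this.congr_deriv ?_
  simp only [Pi.add_apply, id]
  ring

lemma sqrt_one_add_sin_two_mul (t : ℝ) : √(1 + sin (2 * t)) = |cos t + sin t| := by
  rw [← sqrt_sq_eq_abs, sin_two_mul]
  congr 1
  nlinarith [sin_sq_add_cos_sq t]

lemma sqrt_one_sub_sin_two_mul (t : ℝ) : √(1 - sin (2 * t)) = |cos t - sin t| := by
  rw [← sqrt_sq_eq_abs, sin_two_mul]
  congr 1
  nlinarith [sin_sq_add_cos_sq t]

lemma sin_le_cos_of_le_pi_div_four {t : ℝ} (h0 : 0 ≤ t) (h1 : t ≤ π / 4) : sin t ≤ cos t := by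
  rw [← sin_pi_div_two_sub]
  exact sin_le_sin_of_le_of_le_pi_div_two (by linarith [pi_pos]) (by linarith) (by linarith)

theorem stmt_2 : ∀ x ∈ Set.Icc (0:ℝ) 1,
    6 * (Real.sqrt (1 + x) - Real.sqrt (1 - x)) /
      (4 + Real.sqrt (1 + x) + Real.sqrt (1 - x)) ≤ Real.arcsin x := by
  rintro x ⟨hx0, hx1⟩
  obtain ⟨t, ht0, htπ, rfl⟩ : ∃ t, 0 ≤ t ∧ t ≤ π / 4 ∧ x = sin (2 * t) :=
    ⟨arcsin x / 2, by linarith [arcsin_nonneg.mpr hx0], by linarith [arcsin_le_pi_div_two x],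
      by rw [mul_div_cancel₀ _ two_ne_zero, sin_arcsin (by linarith) hx1]⟩
  have hsin : 0 ≤ sin t := sin_nonneg_of_nonneg_of_le_pi ht0 (by linarith [pi_pos])
  have hsc : sin t ≤ cos t := sin_le_cos_of_le_pi_div_four ht0 htπ
  rw [arcsin_sin (by linarith [pi_pos]) (by linarith), sqrt_one_add_sin_two_mul,
    sqrt_one_sub_sin_two_mul, abs_of_nonneg (by linarith), abs_of_nonneg (by linarith),
    div_le_iff₀ (by linarith)]
  linarith [three_mul_sin_le_mul_two_add_cos ht0]
end

section
/- For all x in [0,1], arcsin(x) ≤ πx/(2 + sqrt(1-x^2)). -/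
/-! With `θ = arcsin x` the claim reads `θ (2 + cos θ) ≤ π sin θ` on `[0, π/2]`. The difference
`g θ = π sin θ - θ (2 + cos θ)` vanishes at both endpoints and is concave there, since
`g'' θ = θ cos θ - (π - 2) sin θ ≤ sin θ - (π - 2) sin θ ≤ 0`; so `g ≥ 0` on the interval. -/

open Real Set

theorem Real.mul_cos_le_sin {x : ℝ} (hx₀ : 0 ≤ x) (hxπ : x ≤ π) : x * cos x ≤ sin x := by
  have hsin : 0 ≤ sin x := sin_nonneg_of_nonneg_of_le_pi hx₀ hxπ
  by_cases hcos : cos x ≤ 0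
  · nlinarith
  have hcos : 0 < cos x := not_le.mp hcos
  have hx : x < π / 2 := by
    by_contra! h
    exact hcos.not_ge (cos_nonpos_of_pi_div_two_le_of_le h (by linarith))
  have htan := le_tan hx₀ hx
  rwa [tan_eq_sin_div_cos, le_div_iff₀ hcos] at htan

theorem Real.concaveOn_pi_mul_sin_sub_mul_two_add_cos :
    ConcaveOn ℝ (Icc 0 (π / 2)) (fun θ ↦ π * sin θ - θ * (2 + cos θ)) := by
  have hd₁ : ∀ θ, HasDerivAt (fun θ ↦ π * sin θ - θ * (2 + cos θ))
      (π * cos θ - (2 + cos θ) + θ * sin θ) θ := fun θ ↦ by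
    refine (((hasDerivAt_sin θ).const_mul π).sub
      ((hasDerivAt_id' θ).mul ((hasDerivAt_cos θ).const_add 2))).congr_deriv ?_
    ring
  have hd₂ : ∀ θ, HasDerivAt (fun θ ↦ π * cos θ - (2 + cos θ) + θ * sin θ)
      ((2 - π) * sin θ + θ * cos θ) θ := fun θ ↦ by
    refine ((((hasDerivAt_cos θ).const_mul π).sub ((hasDerivAt_cos θ).const_add 2)).add
      ((hasDerivAt_id' θ).mul (hasDerivAt_sin θ))).congr_deriv ?_
    ring
  refine concaveOn_of_hasDerivWithinAt2_nonpos (convex_Icc _ _)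
    (Continuous.continuousOn (by fun_prop)) (fun θ _ ↦ (hd₁ θ).hasDerivWithinAt)
    (fun θ _ ↦ (hd₂ θ).hasDerivWithinAt) fun θ hθ ↦ ?_
  rw [interior_Icc] at hθ
  have hsin : 0 ≤ sin θ := sin_nonneg_of_nonneg_of_le_pi hθ.1.le (by linarith [hθ.2, pi_pos])
  have hθcos := mul_cos_le_sin hθ.1.le (by linarith [hθ.2, pi_pos])
  nlinarith [pi_gt_three]

theorem Real.mul_two_add_cos_le_pi_mul_sin {θ : ℝ} (hθ : θ ∈ Icc 0 (π / 2)) :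
    θ * (2 + cos θ) ≤ π * sin θ := by
  have hπ : 0 ≤ π / 2 := by positivity
  have hmin := concaveOn_pi_mul_sin_sub_mul_two_add_cos.ge_on_segment
    (left_mem_Icc.mpr hπ) (right_mem_Icc.mpr hπ) (by rwa [segment_eq_Icc hπ])
  norm_num at hmin
  linarith

theorem stmt_3 : ∀ x ∈ Set.Icc (0:ℝ) 1,
    Real.arcsin x ≤ Real.pi * x / (2 + Real.sqrt (1 - x ^ 2)) := by
  intro x ⟨hx₀, hx₁⟩
  have key := mul_two_add_cos_le_pi_mul_sin
    ⟨arcsin_nonneg.mpr hx₀, arcsin_le_pi_div_two x⟩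
  rw [sin_arcsin (by linarith) hx₁, cos_arcsin] at key
  rwa [le_div_iff₀ (by positivity)]
end

section
/- For all x in [0,1], arcsin(x) ≤ (π/(π-2))·x / (2/(π-2) + sqrt(1-x^2)). -/
/-!
Put `θ = arcsin x`; the claim becomes `θ (2 + (π - 2) cos θ) ≤ π sin θ` on `[0, π/2]`, an
inequality that is tight at both ends. For `θ ≤ 0.88` it follows from `sin θ ≥ θ - θ³/6` and
`cos θ ≤ 1 - θ²/2 + 5θ⁴/96`. Near `π/2`, in the variable `φ = π/2 - θ`, the margin is only
about `0.03 φ`, so there we need the fifth-order bound for `sin φ` and a sixth-order one for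
`cos φ`, the latter obtained from the former through `cos φ = 1 - 2 sin² (φ/2)`.
-/

open Real

namespace Real

lemma sin_le_sub_cube_add_pow_five {x : ℝ} (h0 : 0 ≤ x) (h1 : x ≤ 1) :
    sin x ≤ x - x ^ 3 / 6 + x ^ 5 / 100 := by
  have := (abs_le.1 (sin_bound (abs_le.2 ⟨by linarith, h1⟩))).2
  rw [abs_of_nonneg h0] at this
  linarith

lemma cos_le_one_sub_sq_add_pow_four {x : ℝ} (hx : |x| ≤ 1) :
    cos x ≤ 1 - x ^ 2 / 2 + 5 * x ^ 4 / 96 := by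
  have := (abs_le.1 (cos_bound hx)).2
  rw [pow_abs, abs_of_nonneg (by positivity : (0 : ℝ) ≤ x ^ 4)] at this
  linarith

lemma one_sub_sq_add_pow_four_sub_pow_six_le_cos {x : ℝ} (h0 : 0 ≤ x) (h2 : x ≤ 2) :
    1 - x ^ 2 / 2 + x ^ 4 / 24 - x ^ 6 / 600 ≤ cos x := by
  have hsin : sin (x / 2) ^ 2 ≤ (x / 2 - (x / 2) ^ 3 / 6 + (x / 2) ^ 5 / 100) ^ 2 :=
    pow_le_pow_left₀ (sin_nonneg_of_nonneg_of_le_pi (by linarith) (by linarith [pi_gt_three]))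
      (sin_le_sub_cube_add_pow_five (by linarith) (by linarith)) 2
  have hsq : 2 * (x / 2 - (x / 2) ^ 3 / 6 + (x / 2) ^ 5 / 100) ^ 2 ≤
      x ^ 2 / 2 - x ^ 4 / 24 + x ^ 6 / 600 := by
    have : 0 ≤ 4 - x ^ 2 := by nlinarith
    nlinarith [pow_nonneg h0 6, mul_nonneg (pow_nonneg h0 8) this]
  have hcos : cos x = 1 - 2 * sin (x / 2) ^ 2 := by
    rw [← cos_two_mul_eq_one_sub, mul_div_cancel₀ x two_ne_zero]
  linarith

lemma mul_two_add_mul_cos_le_pi_mul_sin_of_le {θ : ℝ} (h0 : 0 ≤ θ) (h1 : θ ≤ 0.88) :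
    θ * (2 + (π - 2) * cos θ) ≤ π * sin θ := by
  have hπ : 3.14 < π := pi_gt_d2
  have hcos := cos_le_one_sub_sq_add_pow_four (x := θ) (abs_le.2 ⟨by linarith, by linarith⟩)
  have hsin := sin_ge_sub_cube h0
  have hθ : θ ^ 2 ≤ 0.7744 := by nlinarith
  calc θ * (2 + (π - 2) * cos θ)
      ≤ θ * (2 + (π - 2) * (1 - θ ^ 2 / 2 + 5 * θ ^ 4 / 96)) := by gcongr; linarith
    _ ≤ π * (θ - θ ^ 3 / 6) := by
      nlinarith [mul_nonneg (mul_nonneg (by linarith : (0 : ℝ) ≤ π - 2) (pow_nonneg h0 3))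
        (sub_nonneg.2 hθ), mul_nonneg (pow_nonneg h0 3) (sub_nonneg.2 hπ.le)]
    _ ≤ π * sin θ := by gcongr

lemma pi_div_two_sub_mul_le_pi_mul_cos {φ : ℝ} (h0 : 0 ≤ φ) (h1 : φ ≤ 0.7) :
    (π / 2 - φ) * (2 + (π - 2) * sin φ) ≤ π * cos φ := by
  have hπ₁ : 3.14 < π := pi_gt_d2
  have hπ₂ : π < 3.15 := pi_lt_d2
  have hsin := sin_le_sub_cube_add_pow_five h0 (by linarith)
  have hcos := one_sub_sq_add_pow_four_sub_pow_six_le_cos h0 (by linarith)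
  calc (π / 2 - φ) * (2 + (π - 2) * sin φ)
      ≤ (π / 2 - φ) * (2 + (π - 2) * (φ - φ ^ 3 / 6 + φ ^ 5 / 100)) := by
        gcongr <;> linarith
    _ ≤ π * (1 - φ ^ 2 / 2 + φ ^ 4 / 24 - φ ^ 6 / 600) := by
      have hπ := mul_pos (sub_pos.2 hπ₁) (sub_pos.2 hπ₂)
      nlinarith [mul_nonneg h0 (mul_nonneg h0 (sub_nonneg.2 h1)), mul_nonneg h0 hπ.le,
        pow_nonneg h0 5, pow_nonneg h0 6, mul_nonneg h0 (sub_nonneg.2 hπ₁.le),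
        mul_nonneg h0 (sub_nonneg.2 hπ₂.le)]
    _ ≤ π * cos φ := by gcongr

lemma mul_two_add_mul_cos_le_pi_mul_sin {θ : ℝ} (h0 : 0 ≤ θ) (h1 : θ ≤ π / 2) :
    θ * (2 + (π - 2) * cos θ) ≤ π * sin θ := by
  rcases le_or_gt θ 0.88 with hθ | hθ
  · exact mul_two_add_mul_cos_le_pi_mul_sin_of_le h0 hθ
  · have := pi_div_two_sub_mul_le_pi_mul_cos (φ := π / 2 - θ) (by linarith)
      (by linarith [pi_lt_d2])
    rwa [sub_sub_cancel, sin_pi_div_two_sub, cos_pi_div_two_sub] at this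

lemma arcsin_mul_two_add_mul_sqrt_le {x : ℝ} (h0 : 0 ≤ x) (h1 : x ≤ 1) :
    arcsin x * (2 + (π - 2) * √(1 - x ^ 2)) ≤ π * x := by
  have := mul_two_add_mul_cos_le_pi_mul_sin (arcsin_nonneg.2 h0) (arcsin_le_pi_div_two x)
  rwa [cos_arcsin, sin_arcsin (by linarith) h1] at this

end Real

theorem stmt_4 : ∀ x ∈ Set.Icc (0:ℝ) 1,
    Real.arcsin x ≤
      (Real.pi / (Real.pi - 2)) * x /
        (2 / (Real.pi - 2) + Real.sqrt (1 - x ^ 2)) := by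
  rintro x ⟨h0, h1⟩
  have hπ : 0 < π - 2 := by linarith [pi_gt_three]
  have hrhs : π / (π - 2) * x / (2 / (π - 2) + √(1 - x ^ 2)) =
      π * x / (2 + (π - 2) * √(1 - x ^ 2)) := by
    field_simp
  rw [hrhs, le_div_iff₀ (by positivity)]
  exact arcsin_mul_two_add_mul_sqrt_le h0 h1
end

section
/- For all x in [0,1], arcsin(x) ≤ π(√2 + 1/2)(sqrt(1+x) - sqrt(1-x))/(4 + sqrt(1+x) + sqrt(1-x)). -/
/-!
Put `x = sin (2t)` with `t ∈ [0, π/4]`; then `√(1 ± x) = cos t ± sin t` and the inequality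
becomes `2t (2 + cos t) ≤ C sin t` with `C = π (√2 + 1/2)`. The difference
`C sin t - 2t (2 + cos t)` has second derivative `(4 - C) sin t + 2t cos t ≤ (6 - C) sin t ≤ 0`,
so it is concave; it vanishes at `t = 0` and `t = π/4`, hence it is nonnegative in between.
-/

open Real Set

namespace Real

lemma mul_cos_le_sin_s6 {t : ℝ} (h0 : 0 ≤ t) (hπ : t ≤ π) : t * cos t ≤ sin t := by
  have hsin : 0 ≤ sin t := sin_nonneg_of_nonneg_of_le_pi h0 hπ
  rcases lt_or_ge t (π / 2) with ht | ht
  · have hcos : 0 < cos t := cos_pos_of_mem_Ioo ⟨by linarith [pi_pos], ht⟩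
    have := le_tan h0 ht
    rwa [tan_eq_sin_div_cos, le_div_iff₀ hcos] at this
  · have hcos : cos t ≤ 0 := cos_nonpos_of_pi_div_two_le_of_le ht (by linarith)
    nlinarith

lemma sin_le_cos {t : ℝ} (h0 : 0 ≤ t) (h1 : t ≤ π / 4) : sin t ≤ cos t := by
  rw [← cos_pi_div_two_sub]
  exact cos_le_cos_of_nonneg_of_le_pi h0 (by linarith [pi_pos]) (by linarith)

lemma one_add_sin_two_mul (t : ℝ) : 1 + sin (2 * t) = (cos t + sin t) ^ 2 := by
  rw [sin_two_mul]
  linear_combination -sin_sq_add_cos_sq t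

lemma one_sub_sin_two_mul (t : ℝ) : 1 - sin (2 * t) = (cos t - sin t) ^ 2 := by
  rw [sin_two_mul]
  linear_combination -sin_sq_add_cos_sq t

lemma concaveOn_mul_sin_sub_mul_two_add_cos {C : ℝ} (hC : 6 ≤ C) :
    ConcaveOn ℝ (Icc 0 π) (fun t ↦ C * sin t - 2 * t * (2 + cos t)) := by
  have hf : ∀ t, HasDerivAt (fun t ↦ C * sin t - 2 * t * (2 + cos t))
      (C * cos t - 2 * (2 + cos t) + 2 * t * sin t) t := fun t ↦
    (((hasDerivAt_sin t).const_mul C).sub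
      (((hasDerivAt_id' t).const_mul 2).mul ((hasDerivAt_cos t).const_add 2))).congr_deriv
      (by ring)
  have hf' : ∀ t, HasDerivAt (fun t ↦ C * cos t - 2 * (2 + cos t) + 2 * t * sin t)
      ((4 - C) * sin t + 2 * t * cos t) t := fun t ↦
    ((((hasDerivAt_cos t).const_mul C).sub (((hasDerivAt_cos t).const_add 2).const_mul 2)).add
      (((hasDerivAt_id' t).const_mul 2).mul (hasDerivAt_sin t))).congr_deriv (by ring)
  refine concaveOn_of_hasDerivWithinAt2_nonpos (convex_Icc 0 π) (by fun_prop)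
    (fun t _ ↦ (hf t).hasDerivWithinAt) (fun t _ ↦ (hf' t).hasDerivWithinAt) ?_
  rintro t ht
  rw [interior_Icc] at ht
  have hsin : 0 ≤ sin t := sin_nonneg_of_nonneg_of_le_pi ht.1.le ht.2.le
  nlinarith [mul_cos_le_sin_s6 ht.1.le ht.2.le]

lemma six_le_pi_mul_sqrt_two_add_half : 6 ≤ π * (√2 + 1 / 2) := by
  have hsqrt : (1.414 : ℝ) ≤ √2 := by
    rw [le_sqrt (by norm_num) (by norm_num)]
    norm_num
  nlinarith [pi_gt_d4]

-- `π (√2 + 1/2)` is the constant for which equality holds at `t = π/4`, i.e. at `x = 1`.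
lemma two_mul_mul_two_add_cos_le {t : ℝ} (h0 : 0 ≤ t) (h1 : t ≤ π / 4) :
    2 * t * (2 + cos t) ≤ π * (√2 + 1 / 2) * sin t := by
  have hπ := pi_pos
  have hconc := concaveOn_mul_sin_sub_mul_two_add_cos six_le_pi_mul_sqrt_two_add_half
  have hmin := hconc.min_le_of_mem_Icc (left_mem_Icc.2 hπ.le) ⟨by positivity, by linarith⟩
    ⟨h0, h1⟩
  have hend : π * (√2 + 1 / 2) * sin (π / 4) - 2 * (π / 4) * (2 + cos (π / 4)) = 0 := by
    rw [sin_pi_div_four, cos_pi_div_four]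
    linear_combination π / 2 * mul_self_sqrt (zero_le_two : (0 : ℝ) ≤ 2)
  simp only [sin_zero, mul_zero, zero_mul, sub_zero, hend, min_self] at hmin
  linarith

end Real

theorem stmt_6 : ∀ x ∈ Set.Icc (0:ℝ) 1,
    Real.arcsin x ≤
      Real.pi * (Real.sqrt 2 + 1 / 2) * (Real.sqrt (1 + x) - Real.sqrt (1 - x)) /
        (4 + Real.sqrt (1 + x) + Real.sqrt (1 - x)) := by
  rintro x ⟨hx0, hx1⟩
  obtain ⟨t, harcsin, ht0, ht1⟩ : ∃ t, arcsin x = 2 * t ∧ 0 ≤ t ∧ t ≤ π / 4 :=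
    ⟨arcsin x / 2, by ring, by linarith [arcsin_nonneg.2 hx0],
      by linarith [arcsin_le_pi_div_two x]⟩
  have hx : x = sin (2 * t) := by rw [← harcsin, sin_arcsin (by linarith) hx1]
  have hsc := sin_le_cos ht0 ht1
  have hsin : 0 ≤ sin t := sin_nonneg_of_nonneg_of_le_pi ht0 (by linarith [pi_pos])
  have hplus : √(1 + x) = cos t + sin t := by
    rw [hx, one_add_sin_two_mul, sqrt_sq (by linarith)]
  have hminus : √(1 - x) = cos t - sin t := by
    rw [hx, one_sub_sin_two_mul, sqrt_sq (by linarith)]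
  rw [harcsin, hplus, hminus, le_div_iff₀ (by linarith)]
  linarith [two_mul_mul_two_add_cos_le ht0 ht1]
end

section
/- For all x in [0,1], π(√2 + 1/2)(sqrt(1+x) - sqrt(1-x))/(4 + sqrt(1+x) + sqrt(1-x)) ≤ πx/(2 + sqrt(1-x^2)). -/
theorem stmt_7 : ∀ x ∈ Set.Icc (0:ℝ) 1,
    Real.pi * (Real.sqrt 2 + 1 / 2) * (Real.sqrt (1 + x) - Real.sqrt (1 - x)) /
      (4 + Real.sqrt (1 + x) + Real.sqrt (1 - x)) ≤
    Real.pi * x / (2 + Real.sqrt (1 - x ^ 2)) := by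
  intro x hx
  obtain ⟨hx0, hx1⟩ := hx
  set a := Real.sqrt (1 + x) with ha_def
  set b := Real.sqrt (1 - x) with hb_def
  have ha : 0 ≤ a := Real.sqrt_nonneg _
  have hb : 0 ≤ b := Real.sqrt_nonneg _
  have ha2 : a ^ 2 = 1 + x := Real.sq_sqrt (by linarith)
  have hb2 : b ^ 2 = 1 - x := Real.sq_sqrt (by linarith)
  have hab : Real.sqrt (1 - x ^ 2) = a * b := by
    rw [show (1:ℝ) - x ^ 2 = (1 + x) * (1 - x) by ring,
      Real.sqrt_mul (by linarith)]
  have hba : b ≤ a := Real.sqrt_le_sqrt (by linarith)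
  have habn : 0 ≤ a * b := mul_nonneg ha hb
  set c := Real.sqrt 2 with hc_def
  have hc : c ^ 2 = 2 := Real.sq_sqrt (by norm_num)
  have hc0 : 0 ≤ c := Real.sqrt_nonneg _
  have hc1 : 1 ≤ c := by nlinarith
  have hc2 : c ≤ 3 / 2 := by nlinarith
  have hs : c ≤ a + b := by nlinarith
  have hs2 : a + b ≤ 2 := by nlinarith [sq_nonneg (a - b), sq_nonneg x]
  have hq : (c + 1 / 2) * ((a + b) ^ 2 + 2) ≤ (a + b) * (4 + (a + b)) := by
    nlinarith [mul_nonneg (show (0:ℝ) ≤ c - 1/2 by linarith)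
        (mul_nonneg (sub_nonneg.2 hs) (sub_nonneg.2 hs2)),
      mul_nonneg (show (0:ℝ) ≤ 1 - c/2 by linarith) (sub_nonneg.2 hs)]
  have key : (c + 1 / 2) * (a - b) * (2 + a * b) ≤ x * (4 + a + b) := by
    have h22 : a ^ 2 + b ^ 2 = 2 := by linarith
    have hx' : (a - b) * (a + b) = 2 * x := by linear_combination ha2 - hb2
    have hmul := mul_le_mul_of_nonneg_left hq (sub_nonneg.2 hba)
    have e1 : (a - b) * ((c + 1 / 2) * ((a + b) ^ 2 + 2)) =
        2 * ((c + 1 / 2) * (a - b) * (2 + a * b)) := by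
      linear_combination (a - b) * (c + 1 / 2) * h22
    have e2 : (a - b) * ((a + b) * (4 + (a + b))) = 2 * (x * (4 + a + b)) := by
      linear_combination (4 + a + b) * hx'
    linarith
  have hpi : 0 < Real.pi := Real.pi_pos
  rw [hab, div_le_div_iff₀ (by positivity) (by positivity)]
  have h := mul_le_mul_of_nonneg_left key hpi.le
  linarith [h]
end

section
/- For all x in [0,1], (π(2-√2)/(π-2√2))·(sqrt(1+x) - sqrt(1-x)) / (√2(4-π)/(π-2√2) + sqrt(1+x) + sqrt(1-x)) ≤ π(√2 + 1/2)(sqrt(1+x) - sqrt(1-x))/(4 + sqrt(1+x) + sqrt(1-x)). -/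
theorem stmt_9 : ∀ x ∈ Set.Icc (0:ℝ) 1,
    (Real.pi * (2 - Real.sqrt 2) / (Real.pi - 2 * Real.sqrt 2)) *
      (Real.sqrt (1 + x) - Real.sqrt (1 - x)) /
    (Real.sqrt 2 * (4 - Real.pi) / (Real.pi - 2 * Real.sqrt 2) +
      Real.sqrt (1 + x) + Real.sqrt (1 - x)) ≤
    Real.pi * (Real.sqrt 2 + 1 / 2) * (Real.sqrt (1 + x) - Real.sqrt (1 - x)) /
      (4 + Real.sqrt (1 + x) + Real.sqrt (1 - x)) := by
  intro x hx
  obtain ⟨hx0, hx1⟩ := hx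
  set a := Real.sqrt (1 + x) with ha
  set b := Real.sqrt (1 - x) with hb
  set r := Real.sqrt 2 with hr
  have ha2 : a ^ 2 = 1 + x := Real.sq_sqrt (by linarith)
  have hb2 : b ^ 2 = 1 - x := Real.sq_sqrt (by linarith)
  have hr2 : r ^ 2 = 2 := Real.sq_sqrt (by norm_num)
  have hd : b ≤ a := Real.sqrt_le_sqrt (by linarith)
  have ha0 : 0 ≤ a := Real.sqrt_nonneg _
  have hb0 : 0 ≤ b := Real.sqrt_nonneg _
  have hr0 : 0 ≤ r := Real.sqrt_nonneg _
  clear_value a b r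
  have hrl : (1.414 : ℝ) ≤ r := by nlinarith
  have hru : r ≤ 1.415 := by nlinarith
  have hpl := Real.pi_gt_d6
  have hpu := Real.pi_lt_d2
  have hpm : 0 < Real.pi - 2 * r := by nlinarith
  have hab : a * b ≤ 1 := by nlinarith [sq_nonneg (a*b - 1), sq_nonneg (a*b)]
  have hs : r ≤ a + b := by nlinarith [sq_nonneg (a + b - r), mul_nonneg ha0 hb0]
  have hden1 : 0 < r * (4 - Real.pi) / (Real.pi - 2 * r) + a + b := by
    have h1 : 0 ≤ r * (4 - Real.pi) / (Real.pi - 2 * r) :=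
      div_nonneg (by nlinarith) (le_of_lt hpm)
    linarith
  have hden2 : 0 < 4 + a + b := by linarith
  rw [div_le_div_iff₀ hden1 hden2]
  have hbr : 0 ≤ (r + 1 / 2) * (Real.pi - 2 * r) - (2 - r) := by nlinarith
  have key : Real.pi * (2 - r) * (a - b) * (4 + a + b) ≤
      Real.pi * (r + 1 / 2) * (a - b) * (r * (4 - Real.pi) + (Real.pi - 2 * r) * (a + b)) := by
    have heq : Real.pi * (a - b) * (4 - 2 * r) * (r ^ 2 - 2) = 0 := by rw [hr2]; ring
    nlinarith [mul_nonneg (mul_nonneg (mul_nonneg Real.pi_pos.le (sub_nonneg.2 hd))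
      (sub_nonneg.2 hs)) hbr, heq]
  have hpm' : (Real.pi - 2 * r) ≠ 0 := ne_of_gt hpm
  have expand : Real.pi * (2 - r) / (Real.pi - 2 * r) * (a - b) * (4 + a + b) =
      Real.pi * (2 - r) * (a - b) * (4 + a + b) / (Real.pi - 2 * r) := by ring
  have expand2 : Real.pi * (r + 1 / 2) * (a - b) * (r * (4 - Real.pi) / (Real.pi - 2 * r) + a + b) =
      Real.pi * (r + 1 / 2) * (a - b) * (r * (4 - Real.pi) + (Real.pi - 2 * r) * (a + b)) /
        (Real.pi - 2 * r) := by
    rw [eq_div_iff hpm']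
    have h3 : r * (4 - Real.pi) / (Real.pi - 2 * r) * (Real.pi - 2 * r) = r * (4 - Real.pi) :=
      div_mul_cancel₀ _ hpm'
    linear_combination Real.pi * (r + 1 / 2) * (a - b) * h3
  rw [expand, expand2]
  gcongr
end

section
/- Let f_β(x) = (β+2)(sqrt(1+x) - sqrt(1-x))/(β + sqrt(1+x) + sqrt(1-x)) for β > 0. Then for all x in (0,1] and β₁, β₂ > 0: f_{β₁}(x) > f_{β₂}(x) if and only if β₁ < β₂. -/
noncomputable def f (β x : ℝ) : ℝ :=
  (β + 2) * (Real.sqrt (1 + x) - Real.sqrt (1 - x)) /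
    (β + Real.sqrt (1 + x) + Real.sqrt (1 - x))

theorem stmt_11 (β₁ β₂ : ℝ) (hβ₁ : 0 < β₁) (hβ₂ : 0 < β₂) :
    ∀ x ∈ Set.Ioc (0:ℝ) 1, (f β₁ x > f β₂ x ↔ β₁ < β₂) := by
  rintro x ⟨hx0, hx1⟩
  set a := Real.sqrt (1 + x) with ha_def
  set b := Real.sqrt (1 - x) with hb_def
  have ha2 : a ^ 2 = 1 + x := Real.sq_sqrt (by linarith)
  have hb2 : b ^ 2 = 1 - x := Real.sq_sqrt (by linarith)
  have ha0 : 0 < a := Real.sqrt_pos.mpr (by linarith)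
  have hb0 : 0 ≤ b := Real.sqrt_nonneg _
  have hba : b < a := Real.sqrt_lt_sqrt (by linarith) (by linarith)
  have hab : a * b = Real.sqrt (1 - x ^ 2) := by
    rw [ha_def, hb_def, ← Real.sqrt_mul (by linarith)]
    ring_nf
  have hab1 : a * b < 1 := by
    rw [hab]
    have : Real.sqrt (1 - x ^ 2) < Real.sqrt 1 :=
      Real.sqrt_lt_sqrt (by nlinarith) (by nlinarith)
    simpa using this
  have hsum : a + b < 2 := by nlinarith [sq_nonneg (a + b - 2)]
  have hd1 : 0 < β₁ + a + b := by linarith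
  have hd2 : 0 < β₂ + a + b := by linarith
  unfold f
  rw [gt_iff_lt, div_lt_div_iff₀ hd2 hd1, ← ha_def, ← hb_def]
  constructor
  · intro h
    by_contra hge
    push_neg at hge
    have key : 0 ≤ (β₁ - β₂) * (2 - (a + b)) * (a - b) :=
      mul_nonneg (mul_nonneg (by linarith) (by linarith)) (by linarith)
    nlinarith [key]
  · intro h
    have key : 0 < (β₂ - β₁) * (2 - (a + b)) * (a - b) :=
      mul_pos (mul_pos (by linarith) (by linarith)) (by linarith)
    nlinarith [key]
end

section
/- If b > √2(4-π)/(π-2√2), then f_b(1) < π/2, where f_b(x) = (b+2)(sqrt(1+x) - sqrt(1-x))/(b + sqrt(1+x) + sqrt(1-x)). In particular f_b is not an upper bound of arcsin on [0,1]. -/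
theorem stmt_14 (b : ℝ) (hb : Real.sqrt 2 * (4 - Real.pi) / (Real.pi - 2 * Real.sqrt 2) < b) :
    f b 1 < Real.pi / 2 ∧ ¬ (∀ x ∈ Set.Icc (0:ℝ) 1, Real.arcsin x ≤ f b x) := by
  have hs2 : Real.sqrt 2 < Real.pi := by
    have h1 : Real.sqrt 2 < 1.5 := by
      rw [show (1.5:ℝ) = Real.sqrt (1.5^2) by rw [Real.sqrt_sq]; norm_num]
      exact Real.sqrt_lt_sqrt (by norm_num) (by norm_num)
    linarith [Real.pi_gt_three]
  have h2s2 : 2 * Real.sqrt 2 < Real.pi := by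
    have h1 : Real.sqrt 2 < 1.45 := by
      rw [show (1.45:ℝ) = Real.sqrt (1.45^2) by rw [Real.sqrt_sq]; norm_num]
      exact Real.sqrt_lt_sqrt (by norm_num) (by norm_num)
    have := Real.pi_gt_d6
    linarith
  have hpi4 : Real.pi < 4 := by linarith [Real.pi_lt_d2]
  have hs2pos : (0:ℝ) < Real.sqrt 2 := Real.sqrt_pos.mpr (by norm_num)
  have hden : 0 < Real.pi - 2 * Real.sqrt 2 := by linarith
  have hbpos : 0 < b := by
    have : 0 < Real.sqrt 2 * (4 - Real.pi) / (Real.pi - 2 * Real.sqrt 2) :=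
      div_pos (by nlinarith) hden
    linarith
  have key : f b 1 < Real.pi / 2 := by
    have h0 : Real.sqrt (1 - 1) = 0 := by norm_num
    have h1 : Real.sqrt (1 + 1) = Real.sqrt 2 := by norm_num
    rw [f, h0, h1]
    rw [div_lt_iff₀ (by linarith)]
    have hb' : Real.sqrt 2 * (4 - Real.pi) < b * (Real.pi - 2 * Real.sqrt 2) := by
      rw [div_lt_iff₀ hden] at hb; linarith
    nlinarith
  refine ⟨key, fun h => ?_⟩
  have := h 1 (by norm_num)
  rw [Real.arcsin_one] at this
  linarith
end

section
/- For every b with √2(4-π)/(π-2√2) < b < 4, the limit as x → 0⁺ of (f_b(x) - arcsin(x))/x³ equals (4-b)/(24(2+b)), which is positive, where f_b(x) = (b+2)(sqrt(1+x) - sqrt(1-x))/(b + sqrt(1+x) + sqrt(1-x)). -/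
open Real Filter Topology Set

theorem tendsto_arcsin_sub_self_div_pow_three :
    Tendsto (fun x : ℝ => (arcsin x - x) / x ^ 3) (𝓝[≠] 0) (𝓝 (1 / 6)) := by
  have hIoo : ∀ᶠ x in 𝓝[≠] (0 : ℝ), x ∈ Ioo (-1 : ℝ) 1 :=
    nhdsWithin_le_nhds (Ioo_mem_nhds (by norm_num) (by norm_num))
  have hne : ∀ᶠ x in 𝓝[≠] (0 : ℝ), x ≠ 0 := self_mem_nhdsWithin
  refine HasDerivAt.lhopital_zero_nhdsNE (f' := fun x => 1 / √(1 - x ^ 2) - 1)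
    (g' := fun x => 3 * x ^ 2) ?_ ?_ ?_ ?_ ?_ ?_
  · filter_upwards [hIoo] with x hx
    exact (hasDerivAt_arcsin hx.1.ne' hx.2.ne).sub (hasDerivAt_id' x)
  · exact .of_forall fun x => by simpa using hasDerivAt_pow 3 x
  · filter_upwards [hne] with x hx
    positivity
  · exact tendsto_nhdsWithin_of_tendsto_nhds
      ((continuous_arcsin.sub continuous_id').tendsto' 0 0 (by simp))
  · exact tendsto_nhdsWithin_of_tendsto_nhds ((continuous_pow 3).tendsto' 0 0 (by simp))
  · have hlim : Tendsto (fun x : ℝ => 1 / (3 * √(1 - x ^ 2) * (1 + √(1 - x ^ 2))))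
        (𝓝[≠] 0) (𝓝 (1 / 6)) := by
      have hc : ContinuousAt (fun x : ℝ => 1 / (3 * √(1 - x ^ 2) * (1 + √(1 - x ^ 2)))) 0 :=
        continuousAt_const.div (by fun_prop) (by norm_num)
      convert hc.tendsto.mono_left nhdsWithin_le_nhds using 2
      norm_num
    refine hlim.congr' ?_
    filter_upwards [hIoo, hne] with x hx hx0
    have hpos : 0 < 1 - x ^ 2 := by nlinarith [hx.1, hx.2]
    have hu : √(1 - x ^ 2) ^ 2 = 1 - x ^ 2 := sq_sqrt hpos.le
    have hu₀ := sqrt_pos.2 hpos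
    field_simp
    linear_combination hu

section Rationalisation

variable {b x s t : ℝ}

theorem mul_sub_mul_eq_of_sq_eq (hs : s ^ 2 = 1 + x) (ht : t ^ 2 = 1 - x) :
    ((b + 2) * (s - t) - x * (b + s + t)) * ((s + t) * (2 + s + t) * (1 + s * t)) =
      2 * x ^ 3 * (b + 2 + s + t) := by
  have h₁ : ((b + 2) * (s - t) - x * (b + s + t)) * (s + t) =
      x * (b * (2 - (s + t)) + 2 * (1 - s * t)) := by
    linear_combination (b + 2) * (hs - ht) - x * (hs + ht)
  have h₂ : (2 - (s + t)) * (2 + s + t) = 2 * (1 - s * t) := by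
    linear_combination -(hs + ht)
  have h₃ : (1 - s * t) * (1 + s * t) = x ^ 2 := by
    linear_combination -(t ^ 2 * hs) - (1 + x) * ht
  calc _ = x * (b * ((2 - (s + t)) * (2 + s + t)) + 2 * (1 - s * t) * (2 + s + t))
        * (1 + s * t) := by linear_combination (2 + s + t) * (1 + s * t) * h₁
    _ = 2 * x * ((1 - s * t) * (1 + s * t)) * (b + 2 + s + t) := by rw [h₂]; ring
    _ = _ := by rw [h₃]; ring

theorem div_sub_div_pow_three_eq_of_sq_eq (hx : x ≠ 0) (hs₀ : 0 < s) (ht₀ : 0 < t)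
    (hb : b + s + t ≠ 0) (hs : s ^ 2 = 1 + x) (ht : t ^ 2 = 1 - x) :
    ((b + 2) * (s - t) / (b + s + t) - x) / x ^ 3 =
      2 * (b + 2 + s + t) / ((1 + s * t) * (2 + s + t) * (s + t) * (b + s + t)) := by
  have := mul_sub_mul_eq_of_sq_eq (b := b) hs ht
  field_simp
  linear_combination this

end Rationalisation

theorem tendsto_f_sub_self_div_pow_three {b : ℝ} (hb : 0 < b) :
    Tendsto (fun x => (f b x - x) / x ^ 3) (𝓝[≠] 0) (𝓝 ((b + 4) / (8 * (b + 2)))) := by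
  have hc : ContinuousAt (fun x : ℝ => 2 * (b + 2 + √(1 + x) + √(1 - x)) /
      ((1 + √(1 + x) * √(1 - x)) * (2 + √(1 + x) + √(1 - x)) * (√(1 + x) + √(1 - x)) *
        (b + √(1 + x) + √(1 - x)))) 0 := by
    apply ContinuousAt.div <;> first | fun_prop | (norm_num; positivity)
  convert (hc.tendsto.mono_left nhdsWithin_le_nhds).congr' ?_ using 2
  · norm_num
    field_simp
    ring
  · filter_upwards [nhdsWithin_le_nhds (Ioo_mem_nhds (by norm_num : (-1 : ℝ) < 0) one_pos),
      self_mem_nhdsWithin] with x hx hx₀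
    have h₁ : 0 < 1 + x := by linarith [hx.1]
    have h₂ : 0 < 1 - x := by linarith [hx.2]
    have hs := sqrt_pos.2 h₁
    have ht := sqrt_pos.2 h₂
    exact (div_sub_div_pow_three_eq_of_sq_eq hx₀ hs ht (by positivity : 0 < b + _ + _).ne'
      (sq_sqrt h₁.le) (sq_sqrt h₂.le)).symm

theorem sqrt_two_mul_four_sub_pi_div_pos : 0 < √2 * (4 - π) / (π - 2 * √2) := by
  have hsqrt : √2 < 3 / 2 := by rw [sqrt_lt' (by norm_num)]; norm_num
  have hsqrt₀ : 0 < √2 := by positivity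
  have hπ₃ := pi_gt_three
  have hπ₄ := pi_lt_four
  exact div_pos (by positivity) (by linarith)

theorem stmt_16 (b : ℝ)
    (hb₁ : Real.sqrt 2 * (4 - Real.pi) / (Real.pi - 2 * Real.sqrt 2) < b) (hb₂ : b < 4) :
    Filter.Tendsto (fun x : ℝ => (f b x - Real.arcsin x) / x ^ 3)
      (nhdsWithin 0 (Set.Ioi 0)) (nhds ((4 - b) / (24 * (2 + b)))) ∧
    0 < (4 - b) / (24 * (2 + b)) := by
  have hb : 0 < b := sqrt_two_mul_four_sub_pi_div_pos.trans hb₁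
  refine ⟨?_, div_pos (by linarith) (by positivity)⟩
  have hlim := (tendsto_f_sub_self_div_pow_three hb).sub tendsto_arcsin_sub_self_div_pow_three
  rw [show (b + 4) / (8 * (b + 2)) - 1 / 6 = (4 - b) / (24 * (2 + b)) by field_simp; ring] at hlim
  refine (hlim.mono_left (nhdsWithin_mono _ fun x (hx : 0 < x) => hx.ne')).congr fun x => ?_
  ring
end

section
/- For every b with √2(4-π)/(π-2√2) < b < 4, f_b(1) < π/2 = arcsin(1), so the function x ↦ (f_b(x) - arcsin(x))/x³ is negative at x = 1 while its limit at 0⁺ is positive, hence it has a zero in (0,1). -/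
/-!
At `x = 1` the inequality `f b 1 < π / 2` is a linear condition on `b`, namely
`√2 (4 - π) < b (π - 2√2)`. Near `0`, writing `s = √(1 + x)` and `t = √(1 - x)`, the derivative
of `f b - arcsin` factors as `x² · ψ(s, t)` with `ψ` continuous and `ψ(1, 1) = (4 - b) / (8 (b + 2))`,
so l'Hôpital's rule gives the limit `(4 - b) / (24 (2 + b)) > 0` of `(f b x - arcsin x) / x³` as
`x → 0⁺`. The intermediate value theorem on `(0, 1]` then produces a zero.
-/

open Real Set Filter Topology

theorem exists_zero_of_tendsto_pos_of_neg {g : ℝ → ℝ} {a c L : ℝ} (hac : a < c)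
    (hg : ContinuousOn g (Ioc a c)) (hlim : Tendsto g (𝓝[>] a) (𝓝 L)) (hL : 0 < L)
    (hc : g c < 0) : ∃ x ∈ Ioo a c, g x = 0 := by
  obtain ⟨x₀, hgx₀, hx₀c, hax₀⟩ := ((hlim.eventually (eventually_gt_nhds hL)).and
    ((eventually_nhdsWithin_of_eventually_nhds (eventually_lt_nhds hac)).and
      self_mem_nhdsWithin)).exists
  have hsub : Icc x₀ c ⊆ Ioc a c := Icc_subset_Ioc (mem_Ioi.1 hax₀) le_rfl
  obtain ⟨x, hx, hgx⟩ := intermediate_value_Ioo' hx₀c.le (hg.mono hsub) ⟨hc, hgx₀⟩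
  exact ⟨x, ⟨mem_Ioi.1 hax₀ |>.trans hx.1, hx.2⟩, hgx⟩

theorem two_mul_sqrt_two_lt_pi : 2 * √2 < π := by
  nlinarith [sq_sqrt (zero_le_two : (0 : ℝ) ≤ 2), sqrt_nonneg 2, pi_gt_three]

theorem sqrt_one_add_add_sqrt_one_sub_pos (x : ℝ) : 0 < √(1 + x) + √(1 - x) := by
  rcases le_or_gt x 0 with hx | hx
  · exact add_pos_of_nonneg_of_pos (sqrt_nonneg _) (sqrt_pos.2 (by linarith))
  · exact add_pos_of_pos_of_nonneg (sqrt_pos.2 (by linarith)) (sqrt_nonneg _)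

theorem f_zero (b : ℝ) : f b 0 = 0 := by simp [f]

theorem f_one (b : ℝ) : f b 1 = (b + 2) * √2 / (b + √2) := by
  norm_num [f]

theorem continuous_f {b : ℝ} (hb : 0 ≤ b) : Continuous (f b) := by
  refine Continuous.div (by fun_prop) (by fun_prop) fun x => ?_
  have := sqrt_one_add_add_sqrt_one_sub_pos x
  rw [add_assoc]
  positivity

theorem f_one_lt_pi_div_two_iff {b : ℝ} (hb : -√2 < b) :
    f b 1 < π / 2 ↔ √2 * (4 - π) / (π - 2 * √2) < b := by
  rw [f_one, div_lt_iff₀ (by linarith), div_lt_iff₀ (by linarith [two_mul_sqrt_two_lt_pi])]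
  constructor <;> intro h <;> linarith

noncomputable def psi (b s t : ℝ) : ℝ :=
  -(b ^ 2 - 2 * b - 4 - 2 * (s + t)) / ((1 + s * t) * (s + t + 2) * (s * t) * (b + s + t) ^ 2)

theorem psi_one_one {b : ℝ} (hb : 2 + b ≠ 0) : psi b 1 1 / 3 = (4 - b) / (24 * (2 + b)) := by
  rw [psi, show (1 + 1 * 1) * (1 + 1 + 2) * (1 * 1) * (b + 1 + 1) ^ 2 = 8 * (2 + b) ^ 2 by ring]
  field_simp
  ring

theorem quotient_rule_sub_inv_eq_sq_mul_psi {b s t : ℝ} (hs : 0 < s) (ht : 0 < t) (hbst : b + s + t ≠ 0)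
    (hst : s ^ 2 + t ^ 2 = 2) :
    ((b + 2) * (1 / (2 * s) + 1 / (2 * t)) * (b + s + t)
        - (b + 2) * (s - t) * (1 / (2 * s) - 1 / (2 * t))) / (b + s + t) ^ 2 - 1 / (s * t)
      = (s ^ 2 - 1) ^ 2 * psi b s t := by
  have h1 : (1 : ℝ) + s * t ≠ 0 := by positivity
  have h2 : s + t + 2 ≠ 0 := by positivity
  rw [psi]
  field_simp
  linear_combination (2 * s ^ 2 * b ^ 2 + s * t * b ^ 2 + b ^ 2 + 2 * s ^ 2 * t * b
    + 2 * s * t ^ 2 * b + 2 * s * t * b + 2 * s * b + 2 * t * b + 2 * b - 4 * s ^ 2 * b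
    - 2 * s ^ 2 * t + 2 * s * t ^ 2 + 4 * s * t + 2 * s + 2 * t + 4 - 4 * s ^ 3 - 8 * s ^ 2) * hst

theorem hasDerivAt_f_sub_arcsin {b x : ℝ} (hb : 0 ≤ b) (hx : x ∈ Ioo (-1) 1) :
    HasDerivAt (fun y => f b y - arcsin y) (x ^ 2 * psi b (√(1 + x)) (√(1 - x))) x := by
  obtain ⟨hx₁, hx₂⟩ := hx
  have hp : 0 < 1 + x := by linarith
  have hm : 0 < 1 - x := by linarith
  have hs : HasDerivAt (fun y => √(1 + y)) (1 / (2 * √(1 + x))) x := by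
    simpa using ((hasDerivAt_id x).const_add 1).sqrt hp.ne'
  have ht : HasDerivAt (fun y => √(1 - y)) (-(1 / (2 * √(1 - x)))) x := by
    simpa [neg_div] using ((hasDerivAt_id x).const_sub 1).sqrt hm.ne'
  have hden : 0 < b + √(1 + x) + √(1 - x) := by
    linarith [sqrt_one_add_add_sqrt_one_sub_pos x]
  have hf : HasDerivAt (f b) _ x :=
    ((hs.sub ht).const_mul (b + 2)).div (((hasDerivAt_const x b).add hs).add ht) hden.ne'
  refine (hf.sub (hasDerivAt_arcsin (by linarith) (by linarith))).congr_deriv ?_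
  have key := quotient_rule_sub_inv_eq_sq_mul_psi (sqrt_pos.2 hp) (sqrt_pos.2 hm) hden.ne'
    (by rw [sq_sqrt hp.le, sq_sqrt hm.le]; ring)
  rw [sq_sqrt hp.le, add_sub_cancel_left] at key
  rw [← key, show 1 - x ^ 2 = (1 + x) * (1 - x) by ring, sqrt_mul hp.le]
  simp only [Pi.sub_apply]
  ring

theorem tendsto_f_sub_arcsin_div_cube {b : ℝ} (hb : 0 ≤ b) :
    Tendsto (fun x => (f b x - arcsin x) / x ^ 3) (𝓝[>] 0) (𝓝 ((4 - b) / (24 * (2 + b)))) := by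
  have hψ : ContinuousAt (fun x => psi b (√(1 + x)) (√(1 - x)) / 3) 0 := by
    refine (ContinuousAt.div (by fun_prop) (by fun_prop) ?_).div_const 3
    norm_num
    linarith
  have hψ₀ := hψ.tendsto
  simp only [add_zero, sub_zero, sqrt_one] at hψ₀
  rw [psi_one_one (by linarith)] at hψ₀
  refine HasDerivAt.lhopital_zero_right_on_Ioo one_pos
    (fun x hx => hasDerivAt_f_sub_arcsin hb ⟨by linarith [hx.1], hx.2⟩)
    (fun x _ => hasDerivAt_pow 3 x) (fun x hx => by have := hx.1; positivity) ?_ ?_ ?_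
  · have : Tendsto (fun x => f b x - arcsin x) (𝓝 0) (𝓝 (f b 0 - arcsin 0)) :=
      ((continuous_f hb).sub continuous_arcsin).tendsto 0
    rw [f_zero, arcsin_zero, sub_zero] at this
    exact this.mono_left nhdsWithin_le_nhds
  · exact ((continuous_pow 3).tendsto' 0 0 (by norm_num)).mono_left nhdsWithin_le_nhds
  · refine (hψ₀.mono_left nhdsWithin_le_nhds).congr' ?_
    filter_upwards [self_mem_nhdsWithin] with x hx
    field_simp [(mem_Ioi.1 hx).ne']
    ring

theorem stmt_17 (b : ℝ)
    (hb₁ : Real.sqrt 2 * (4 - Real.pi) / (Real.pi - 2 * Real.sqrt 2) < b) (hb₂ : b < 4) :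
    f b 1 < Real.pi / 2 ∧ Real.arcsin 1 = Real.pi / 2 ∧
    (f b 1 - Real.arcsin 1) / (1:ℝ) ^ 3 < 0 ∧
    Filter.Tendsto (fun x : ℝ => (f b x - Real.arcsin x) / x ^ 3)
      (nhdsWithin 0 (Set.Ioi 0)) (nhds ((4 - b) / (24 * (2 + b)))) ∧
    0 < (4 - b) / (24 * (2 + b)) ∧
    ∃ x ∈ Set.Ioo (0:ℝ) 1, (f b x - Real.arcsin x) / x ^ 3 = 0 := by
  have hb : 0 < b := lt_trans (div_pos (mul_pos (by positivity) (by linarith [pi_lt_four]))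
    (by linarith [two_mul_sqrt_two_lt_pi])) hb₁
  have hf₁ : f b 1 < π / 2 := (f_one_lt_pi_div_two_iff (by linarith [sqrt_nonneg 2])).2 hb₁
  have hg₁ : (f b 1 - arcsin 1) / (1 : ℝ) ^ 3 < 0 := by
    rw [arcsin_one, one_pow, div_one]
    linarith
  have hlim := tendsto_f_sub_arcsin_div_cube hb.le
  have hL : 0 < (4 - b) / (24 * (2 + b)) := div_pos (by linarith) (by linarith)
  have hcont : ContinuousOn (fun x => (f b x - arcsin x) / x ^ 3) (Ioc 0 1) :=
    ((continuous_f hb.le).sub continuous_arcsin).continuousOn.div (continuousOn_pow 3)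
      fun x hx => pow_ne_zero 3 hx.1.ne'
  exact ⟨hf₁, arcsin_one, hg₁, hlim, hL,
    exists_zero_of_tendsto_pos_of_neg one_pos hcont hlim hL hg₁⟩
end
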